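/- Let Θ̂, Θ₁, Θ₂ be polarizations such that Θ̂ < Θ₁, Θ̂ < Θ₂, and the closures of ℝ²∖C_{1,+} and ℝ²∖C_{2,+} intersect only at the origin (C_{i,+} denoting the plus-cone of Θ_i). Then there exists a constant C, depending only on ε, such that for all v, w ∈ C^r(R): Σ_{n≥0} |⟨ψ_{Θ̂,n,−}(D)v, ψ_{Θ̂,n,−}(D)w⟩_{L²(ℝ²)}| ≤ C·|v|_{Θ₁}·|w|_{Θ₂}. (This is the content of the paper's transversality Lemma: for transfer-operator images supported in transversal cones, the minus-components are almost orthogonal.) -/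

import Mathlib

noncomputable section
open MeasureTheory Filter Finset Function Set Real Topology
open scoped ENNReal NNReal

namespace AngleMult

/-! ### Anisotropic Sobolev norms on `ℝ²` -/

/-- Euclidean magnitude on `ℝ × ℝ`. -/
def en (v : ℝ × ℝ) : ℝ := Real.sqrt (v.1 ^ 2 + v.2 ^ 2)

/-- Fourier transform on `ℝ²`. -/
def FT (u : ℝ × ℝ → ℂ) (ξ : ℝ × ℝ) : ℂ :=
  ∫ x : ℝ × ℝ, Complex.exp (-(2 * Real.pi * (x.1 * ξ.1 + x.2 * ξ.2)) * Complex.I) * u x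

/-- Inverse Fourier transform on `ℝ²`. -/
def invFT (u : ℝ × ℝ → ℂ) (x : ℝ × ℝ) : ℂ :=
  ∫ ξ : ℝ × ℝ, Complex.exp ((2 * Real.pi * (x.1 * ξ.1 + x.2 * ξ.2)) * Complex.I) * u ξ

/-- The rectangle `R = (-η,η) × (δ,2δ)`. -/
def Rset (η δ : ℝ) : Set (ℝ × ℝ) := Set.Ioo (-η) η ×ˢ Set.Ioo δ (2 * δ)

/-- The rectangle `Q = (-2η,2η) × (0,3δ)`. -/
def Qset (η δ : ℝ) : Set (ℝ × ℝ) := Set.Ioo (-(2 * η)) (2 * η) ×ˢ Set.Ioo 0 (3 * δ)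

/-- `C ⋐ C'`: the closure of `C` is contained in the interior of `C'` except for the
origin. -/
def Csub (C C' : Set (ℝ × ℝ)) : Prop := closure C \ {0} ⊆ interior C'

/-- A polarization `Θ = (C₊, C₋, φ₊, φ₋)`: a pair of closed cones intersecting only at `0`
together with smooth functions on the unit circle (encoded as positively homogeneous
functions of degree `0` on `ℝ² ∖ {0}`) adapted to them. -/
structure Polarization where
  Cp : Set (ℝ × ℝ)
  Cm : Set (ℝ × ℝ)
  phip : ℝ × ℝ → ℝ
  phim : ℝ × ℝ → ℝ
  closed_p : IsClosed Cp
  closed_m : IsClosed Cm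
  cone_p : ∀ (c : ℝ) v, v ∈ Cp → c • v ∈ Cp
  cone_m : ∀ (c : ℝ) v, v ∈ Cm → c • v ∈ Cm
  inter_eq : Cp ∩ Cm = {0}
  smooth_p : ContDiffOn ℝ (⊤ : ℕ∞) phip {v : ℝ × ℝ | v ≠ 0}
  smooth_m : ContDiffOn ℝ (⊤ : ℕ∞) phim {v : ℝ × ℝ | v ≠ 0}
  homog_p : ∀ c : ℝ, 0 < c → ∀ v, phip (c • v) = phip v
  mem_Icc_p : ∀ v, phip v ∈ Set.Icc (0 : ℝ) 1
  one_on_p : ∀ v ∈ Cp, v ≠ 0 → phip v = 1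
  zero_on_m : ∀ v ∈ Cm, v ≠ 0 → phip v = 0
  phim_def : ∀ v, phim v = 1 - phip v

/-- The order `Θ < Θ'` on polarizations: `ℝ² ∖ C'₊ ⋐ C₋`. -/
def PolLt (Θ Θ' : Polarization) : Prop := Csub (Set.univ \ Θ'.Cp) Θ.Cm

/-- Admissibility of the fixed bump function `χ`. -/
def ChiOK (χ : ℝ → ℝ) : Prop :=
  ContDiff ℝ (⊤ : ℕ∞) χ ∧ (∀ s ≤ (1 : ℝ), χ s = 1) ∧ (∀ s, (2 : ℝ) ≤ s → χ s = 0) ∧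
    ∀ s, χ s ∈ Set.Icc (0 : ℝ) 1

/-- The Littlewood-Paley functions `ψ_{Θ,n,σ}` (`σ = true` is `+`, `σ = false` is `-`). -/
def psiLP (χ : ℝ → ℝ) (Θ : Polarization) (n : ℕ) (σ : Bool) (ξ : ℝ × ℝ) : ℝ :=
  if n = 0 then χ (en ξ) / 2
  else (if σ then Θ.phip ξ else Θ.phim ξ) *
    (χ ((2 : ℝ) ^ (-(n : ℤ)) * en ξ) - χ ((2 : ℝ) ^ (-(n : ℤ) + 1) * en ξ))

/-- The pseudo-differential operator `ψ_{Θ,n,σ}(D) u = 𝓕⁻¹(ψ_{Θ,n,σ} · 𝓕u)`. -/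
def psiD (χ : ℝ → ℝ) (Θ : Polarization) (n : ℕ) (σ : Bool) (u : ℝ × ℝ → ℂ) :
    ℝ × ℝ → ℂ :=
  invFT fun ξ => (psiLP χ Θ n σ ξ : ℂ) * FT u ξ

/-- The partial norm `‖u‖^σ_{Θ,p} = (∑_n 2^{2pn} ‖ψ_{Θ,n,σ}·𝓕u‖²_{L²})^{1/2}`
(`ℝ≥0∞`-valued). -/
def segNorm (χ : ℝ → ℝ) (Θ : Polarization) (p : ℝ) (σ : Bool) (u : ℝ × ℝ → ℂ) : ℝ≥0∞ :=
  (∑' n : ℕ, ENNReal.ofReal ((2 : ℝ) ^ (2 * p * (n : ℝ))) *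
      (eLpNorm (fun ξ => (psiLP χ Θ n σ ξ : ℂ) * FT u ξ) 2 volume) ^ 2) ^ (1 / 2 : ℝ)

/-- The anisotropic Sobolev norm `‖u‖_{Θ,p,q}`. -/
def anorm (χ : ℝ → ℝ) (Θ : Polarization) (p q : ℝ) (u : ℝ × ℝ → ℂ) : ℝ≥0∞ :=
  ((segNorm χ Θ p true u) ^ 2 + (segNorm χ Θ q false u) ^ 2) ^ (1 / 2 : ℝ)

/-- The (usual) Sobolev norm of order `s` of `u`, via the Fourier transform. -/
def wnorm (s : ℝ) (u : ℝ × ℝ → ℂ) : ℝ≥0∞ :=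
  eLpNorm (fun ξ => ((1 + en ξ ^ 2) ^ (s / 2) : ℝ) * FT u ξ) 2 volume

/-- `u ∈ C^r(R)`: a `C^r` function supported in `R`. -/
def CrSupp (r : ℕ) (η δ : ℝ) (u : ℝ × ℝ → ℂ) : Prop :=
  ContDiff ℝ r u ∧ Function.support u ⊆ Rset η δ

/-- `u ∈ C^∞(R)`: a `C^∞` function supported in `R`. -/
def SmoothSupp (η δ : ℝ) (u : ℝ × ℝ → ℂ) : Prop :=
  ContDiff ℝ (⊤ : ℕ∞) u ∧ Function.support u ⊆ Rset η δ


/-! ### Auxiliary material for the proof -/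

section Auxiliary

open scoped FourierTransform RealInnerProductSpace ComplexConjugate

/-! #### Transfer between `ℝ × ℝ` and `EuclideanSpace ℝ (Fin 2)` -/

abbrev E2 : Type := EuclideanSpace ℝ (Fin 2)

def PL : E2 ≃L[ℝ] ℝ × ℝ :=
  (EuclideanSpace.equiv (Fin 2) ℝ).trans (ContinuousLinearEquiv.finTwoArrow ℝ ℝ)

lemma PL_apply (x : E2) : PL x = (x 0, x 1) := rfl

lemma PL_measurePreserving : MeasurePreserving (⇑PL) volume volume := by
  have : ⇑PL = (⇑(MeasurableEquiv.finTwoArrow : (Fin 2 → ℝ) ≃ᵐ ℝ × ℝ)) ∘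
      (⇑(MeasurableEquiv.toLp 2 (Fin 2 → ℝ)).symm) := rfl
  rw [this]
  exact (volume_preserving_finTwoArrow ℝ).comp
    (EuclideanSpace.volume_preserving_symm_measurableEquiv_toLp (Fin 2))

lemma PL_measurableEmbedding : MeasurableEmbedding (⇑PL) :=
  PL.toHomeomorph.measurableEmbedding

lemma PL_inner (x y : E2) : ⟪x, y⟫ = (PL x).1 * (PL y).1 + (PL x).2 * (PL y).2 := by
  simp [PL_apply, PiLp.inner_apply, Fin.sum_univ_two, RCLike.inner_apply]; ring

lemma integral_PL {G : Type*} [NormedAddCommGroup G] [NormedSpace ℝ G] (F : ℝ × ℝ → G) :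
    ∫ x : ℝ × ℝ, F x = ∫ v : E2, F (PL v) := by
  rw [← PL_measurePreserving.integral_comp PL_measurableEmbedding]

lemma FT_comp (u : ℝ × ℝ → ℂ) (ξ : E2) : FT u (PL ξ) = 𝓕 (u ∘ ⇑PL) ξ := by
  rw [Real.fourier_eq', FT, integral_PL]
  congr 1 with v
  rw [smul_eq_mul, PL_inner]
  congr 2
  push_cast
  ring

lemma invFT_comp (u : ℝ × ℝ → ℂ) (x : E2) : invFT u (PL x) = 𝓕⁻ (u ∘ ⇑PL) x := by
  rw [Real.fourierInv_eq', invFT, integral_PL]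
  congr 1 with v
  rw [smul_eq_mul, PL_inner]
  congr 2
  push_cast
  ring

/-! #### Parseval for smooth compactly supported functions -/

/-- A smooth compactly supported function on `E2` as a Schwartz map. -/
def toSchwartz (f : E2 → ℂ) (hf : ContDiff ℝ (⊤ : ℕ∞) f) (h2 : HasCompactSupport f) :
    SchwartzMap E2 ℂ where
  toFun := f
  smooth' := hf
  decay' := by
    intro k n
    have hn : (n : WithTop ℕ∞) ≤ ((⊤ : ℕ∞) : WithTop ℕ∞) := by exact_mod_cast le_top
    have hcont : Continuous fun x => ‖x‖ ^ k * ‖iteratedFDeriv ℝ n f x‖ :=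
      ((continuous_norm.pow k)).mul (hf.continuous_iteratedFDeriv hn).norm
    have hsupp : HasCompactSupport fun x => ‖x‖ ^ k * ‖iteratedFDeriv ℝ n f x‖ := by
      apply HasCompactSupport.mul_left
      exact (h2.iteratedFDeriv n).norm
    obtain ⟨C, hC⟩ := hcont.bounded_above_of_compact_support hsupp
    refine ⟨C, fun x => ?_⟩
    have := hC x
    rwa [norm_of_nonneg (by positivity)] at this

lemma integrable_FT {f : E2 → ℂ} (hf : ContDiff ℝ (⊤ : ℕ∞) f) (h2 : HasCompactSupport f) :
    Integrable (𝓕 f) := by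
  have : 𝓕 f = ⇑(SchwartzMap.fourierTransformCLM ℂ (toSchwartz f hf h2)) := rfl
  rw [this]
  exact SchwartzMap.integrable _

lemma integrable_invFT {f : E2 → ℂ} (hf : ContDiff ℝ (⊤ : ℕ∞) f) (h2 : HasCompactSupport f) :
    Integrable (𝓕⁻ f) := by
  have h : (𝓕⁻ f) = (𝓕 f) ∘ (fun w : E2 => -w) := by
    ext w; exact Real.fourierInv_eq_fourier_neg f w
  rw [h]
  have hmap : Measure.map (fun w : E2 => -w) volume = volume :=
    (Measure.measurePreserving_neg (volume : Measure E2)).map_eq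
  refine Integrable.comp_measurable ?_ measurable_neg
  rw [hmap]
  exact integrable_FT hf h2

lemma conj_invFT (g : E2 → ℂ) (x : E2) :
    (starRingEnd ℂ) (𝓕⁻ g x) = 𝓕 (fun v => (starRingEnd ℂ) (g v)) x := by
  rw [Real.fourierInv_eq', Real.fourier_eq', ← integral_conj]
  congr 1 with v
  rw [smul_eq_mul, smul_eq_mul, map_mul, ← Complex.exp_conj]
  congr 1
  simp only [map_mul, Complex.conj_I, Complex.conj_ofReal]
  push_cast
  ring

lemma innerL_flip : (innerₗ E2).flip = innerₗ E2 := by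
  apply LinearMap.ext; intro x; apply LinearMap.ext; intro y
  simp only [LinearMap.flip_apply, innerₗ_apply_apply]
  exact real_inner_comm x y

lemma parseval_E2 {F G : E2 → ℂ} (hF : ContDiff ℝ (⊤ : ℕ∞) F) (hF2 : HasCompactSupport F)
    (hG : ContDiff ℝ (⊤ : ℕ∞) G) (hG2 : HasCompactSupport G) :
    ∫ x : E2, 𝓕⁻ F x * (starRingEnd ℂ) (𝓕⁻ G x) = ∫ ξ : E2, F ξ * (starRingEnd ℂ) (G ξ) := by
  have hH : Integrable (fun v => (starRingEnd ℂ) (G v)) := by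
    apply Continuous.integrable_of_hasCompactSupport
    · exact Complex.continuous_conj.comp hG.continuous
    · exact hG2.comp_left (g := (starRingEnd ℂ)) (by simp)
  have hg : Integrable (𝓕⁻ F) := integrable_invFT hF hF2
  have hFi : Integrable F := hF.continuous.integrable_of_hasCompactSupport hF2
  have frfl : ∀ (f : E2 → ℂ) w, VectorFourier.fourierIntegral 𝐞 volume (innerₗ E2) f w = 𝓕 f w :=
    fun _ _ => rfl
  have hL : Continuous fun p : E2 × E2 => (innerₗ E2) p.1 p.2 := continuous_inner
  have key := VectorFourier.integral_fourierIntegral_smul_eq_flip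
    (e := Real.fourierChar) (L := innerₗ E2) (μ := volume) (ν := volume)
    Real.continuous_fourierChar hL hH hg
  rw [innerL_flip] at key
  simp only [frfl, smul_eq_mul] at key
  have inv : 𝓕 (𝓕⁻ F) = F :=
    Continuous.fourier_fourierInv_eq hF.continuous hFi (integrable_FT hF hF2)
  calc ∫ x : E2, 𝓕⁻ F x * (starRingEnd ℂ) (𝓕⁻ G x)
      = ∫ x : E2, 𝓕 (fun v => (starRingEnd ℂ) (G v)) x * 𝓕⁻ F x := by
        simp_rw [conj_invFT, mul_comm]
    _ = ∫ x : E2, (starRingEnd ℂ) (G x) * 𝓕 (𝓕⁻ F) x := key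
    _ = ∫ ξ : E2, F ξ * (starRingEnd ℂ) (G ξ) := by rw [inv]; simp_rw [mul_comm]

/-- Parseval for smooth compactly supported functions on `ℝ × ℝ`. -/
lemma parseval_R2 {f g : ℝ × ℝ → ℂ} (hf : ContDiff ℝ (⊤ : ℕ∞) f) (hf2 : HasCompactSupport f)
    (hg : ContDiff ℝ (⊤ : ℕ∞) g) (hg2 : HasCompactSupport g) :
    ∫ x : ℝ × ℝ, invFT f x * (starRingEnd ℂ) (invFT g x)
      = ∫ ξ : ℝ × ℝ, f ξ * (starRingEnd ℂ) (g ξ) := by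
  rw [integral_PL (fun x => invFT f x * (starRingEnd ℂ) (invFT g x)),
    integral_PL (fun ξ => f ξ * (starRingEnd ℂ) (g ξ))]
  simp_rw [invFT_comp]
  exact parseval_E2 (hf.comp PL.contDiff) (hf2.comp_homeomorph PL.toHomeomorph)
    (hg.comp PL.contDiff) (hg2.comp_homeomorph PL.toHomeomorph)

/-! #### Properties of `en` -/

lemma en_nonneg (ξ : ℝ × ℝ) : 0 ≤ en ξ := Real.sqrt_nonneg _

lemma norm_le_en (ξ : ℝ × ℝ) : ‖ξ‖ ≤ en ξ := by
  have h1 : |ξ.1| ≤ en ξ := by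
    rw [en, ← Real.sqrt_sq_eq_abs]
    exact Real.sqrt_le_sqrt (by nlinarith [sq_nonneg ξ.2])
  have h2 : |ξ.2| ≤ en ξ := by
    rw [en, ← Real.sqrt_sq_eq_abs]
    exact Real.sqrt_le_sqrt (by nlinarith [sq_nonneg ξ.1])
  rw [Prod.norm_def]
  simp only [Real.norm_eq_abs]
  exact max_le h1 h2

lemma en_continuous : Continuous en :=
  Real.continuous_sqrt.comp ((continuous_fst.pow 2).add (continuous_snd.pow 2))

lemma en_zero : en (0 : ℝ × ℝ) = 0 := by simp [en]

lemma en_contDiffAt {ξ : ℝ × ℝ} (hξ : ξ ≠ 0) : ContDiffAt ℝ (⊤ : ℕ∞) en ξ := by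
  have hne : ξ.1 ^ 2 + ξ.2 ^ 2 ≠ 0 := by
    have : ξ.1 ≠ 0 ∨ ξ.2 ≠ 0 := by
      by_contra h
      push_neg at h
      exact hξ (Prod.ext h.1 h.2)
    rcases this with h | h
    · positivity
    · positivity
  exact (Real.contDiffAt_sqrt hne).comp ξ
    (((contDiff_fst.pow 2).add (contDiff_snd.pow 2)).contDiffAt)

/-! #### Properties of `psiLP` -/

variable {χ : ℝ → ℝ}

lemma chi_diff_nonneg (hχ : ChiOK χ) (s : ℝ) : 0 ≤ χ s - χ (2 * s) := by
  obtain ⟨-, h1, h0, hm⟩ := hχ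
  rcases le_or_gt s 1 with h | h
  · rw [h1 s h]
    linarith [(hm (2 * s)).2]
  · rw [h0 (2 * s) (by linarith)]
    linarith [(hm s).1]

lemma chi_diff_le_one (hχ : ChiOK χ) (s : ℝ) : χ s - χ (2 * s) ≤ 1 := by
  obtain ⟨-, h1, h0, hm⟩ := hχ
  linarith [(hm s).2, (hm (2 * s)).1]

lemma two_zpow_succ (n : ℕ) (t : ℝ) :
    (2 : ℝ) ^ (-(n : ℤ) + 1) * t = 2 * ((2 : ℝ) ^ (-(n : ℤ)) * t) := by
  rw [zpow_add_one₀ (by norm_num : (2:ℝ) ≠ 0)]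
  ring

lemma phim_mem_Icc (Θ : Polarization) (v : ℝ × ℝ) : Θ.phim v ∈ Set.Icc (0:ℝ) 1 := by
  rw [Θ.phim_def]
  obtain ⟨h0, h1⟩ := Θ.mem_Icc_p v
  constructor <;> [linarith; linarith]

lemma psiLP_zero_apply (Θ : Polarization) (σ : Bool) (ξ : ℝ × ℝ) :
    psiLP χ Θ 0 σ ξ = χ (en ξ) / 2 := by simp [psiLP]

lemma psiLP_pos_apply (Θ : Polarization) {n : ℕ} (hn : n ≠ 0) (ξ : ℝ × ℝ) :
    psiLP χ Θ n true ξ =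
      Θ.phip ξ * (χ ((2 : ℝ) ^ (-(n : ℤ)) * en ξ) - χ ((2 : ℝ) ^ (-(n : ℤ) + 1) * en ξ)) := by
  simp [psiLP, hn]

lemma psiLP_neg_apply (Θ : Polarization) {n : ℕ} (hn : n ≠ 0) (ξ : ℝ × ℝ) :
    psiLP χ Θ n false ξ =
      Θ.phim ξ * (χ ((2 : ℝ) ^ (-(n : ℤ)) * en ξ) - χ ((2 : ℝ) ^ (-(n : ℤ) + 1) * en ξ)) := by
  simp [psiLP, hn]

lemma psiLP_nonneg (hχ : ChiOK χ) (Θ : Polarization) (n : ℕ) (σ : Bool) (ξ : ℝ × ℝ) :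
    0 ≤ psiLP χ Θ n σ ξ := by
  rw [psiLP]
  split
  · have := (hχ.2.2.2 (en ξ)).1
    linarith
  · apply mul_nonneg
    · cases σ
      · simpa using (phim_mem_Icc Θ ξ).1
      · simpa using (Θ.mem_Icc_p ξ).1
    · have := chi_diff_nonneg hχ ((2 : ℝ) ^ (-(n : ℤ)) * en ξ)
      rw [← two_zpow_succ] at this
      linarith

/-- The key pointwise transversality estimate. -/
lemma psiLP_key (hχ : ChiOK χ) (Θhat Θ₁ Θ₂ : Polarization)
    (hK : closure (Set.univ \ Θ₁.Cp) ∩ closure (Set.univ \ Θ₂.Cp) ⊆ {0})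
    (n : ℕ) {ξ : ℝ × ℝ} (hξ : ξ ≠ 0) :
    psiLP χ Θhat n false ξ ^ 2 ≤
      psiLP χ Θ₁ n true ξ * (psiLP χ Θ₂ n true ξ + psiLP χ Θ₂ n false ξ) +
        (psiLP χ Θ₁ n true ξ + psiLP χ Θ₁ n false ξ) * psiLP χ Θ₂ n true ξ := by
  have hone : Θ₁.phip ξ = 1 ∨ Θ₂.phip ξ = 1 := by
    by_cases h1 : ξ ∈ closure (Set.univ \ Θ₁.Cp)
    · right
      have h2 : ξ ∉ closure (Set.univ \ Θ₂.Cp) := by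
        intro h2
        exact hξ (hK ⟨h1, h2⟩)
      have : ξ ∈ Θ₂.Cp := by
        by_contra hc
        exact h2 (subset_closure ⟨trivial, hc⟩)
      exact Θ₂.one_on_p ξ this hξ
    · left
      have : ξ ∈ Θ₁.Cp := by
        by_contra hc
        exact h1 (subset_closure ⟨trivial, hc⟩)
      exact Θ₁.one_on_p ξ this hξ
  rcases Nat.eq_zero_or_pos n with hn | hn
  · subst hn
    simp only [psiLP_zero_apply]
    have h0 := (hχ.2.2.2 (en ξ)).1
    nlinarith [(hχ.2.2.2 (en ξ)).2]
  · have hn' : n ≠ 0 := hn.ne'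
    rw [psiLP_neg_apply Θhat hn' ξ, psiLP_pos_apply Θ₁ hn' ξ, psiLP_pos_apply Θ₂ hn' ξ,
      psiLP_neg_apply Θ₂ hn' ξ, psiLP_neg_apply Θ₁ hn' ξ]
    set d : ℝ := χ ((2 : ℝ) ^ (-(n : ℤ)) * en ξ) - χ ((2 : ℝ) ^ (-(n : ℤ) + 1) * en ξ) with hd
    have hd0 : 0 ≤ d := by
      have := chi_diff_nonneg hχ ((2 : ℝ) ^ (-(n : ℤ)) * en ξ)
      rw [← two_zpow_succ] at this
      linarith
    rw [Θhat.phim_def, Θ₁.phim_def, Θ₂.phim_def]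
    obtain ⟨hh0, hh1⟩ := Θhat.mem_Icc_p ξ
    obtain ⟨h10, h11⟩ := Θ₁.mem_Icc_p ξ
    obtain ⟨h20, h21⟩ := Θ₂.mem_Icc_p ξ
    have hsq : (1 - Θhat.phip ξ) ^ 2 ≤ 1 := by nlinarith
    rcases hone with h | h <;> rw [h] <;>
      nlinarith [mul_le_mul_of_nonneg_right hsq (sq_nonneg d),
        mul_nonneg h20 (sq_nonneg d), mul_nonneg h10 (sq_nonneg d)]

lemma psiLP_contDiff (hχ : ChiOK χ) (Θ : Polarization) (n : ℕ) (σ : Bool) :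
    ContDiff ℝ (⊤ : ℕ∞) (psiLP χ Θ n σ) := by
  obtain ⟨hχs, hχ1, hχ0, hχm⟩ := hχ
  rw [contDiff_iff_contDiffAt]
  intro ξ
  by_cases hξ : ξ = (0 : ℝ × ℝ)
  · subst hξ
    -- near `0` the function is constant
    have hU : {x : ℝ × ℝ | en x < 1} ∈ 𝓝 (0 : ℝ × ℝ) := by
      have : IsOpen {x : ℝ × ℝ | en x < 1} := isOpen_lt en_continuous continuous_const
      exact this.mem_nhds (by simp [en_zero])
    rcases Nat.eq_zero_or_pos n with hn | hn
    · subst hn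
      apply (contDiffAt_const (c := (1:ℝ)/2)).congr_of_eventuallyEq
      filter_upwards [hU] with x hx
      rw [psiLP_zero_apply, hχ1 (en x) (le_of_lt hx)]
    · have hn' : n ≠ 0 := hn.ne'
      apply (contDiffAt_const (c := (0:ℝ))).congr_of_eventuallyEq
      filter_upwards [hU] with x hx
      have he0 : 0 ≤ en x := en_nonneg x
      have harg1 : (2 : ℝ) ^ (-(n : ℤ)) * en x ≤ 1 := by
        have hle : (2 : ℝ) ^ (-(n : ℤ)) ≤ 1 := by
          apply zpow_le_one_of_nonpos₀ (by norm_num : (1:ℝ) ≤ 2) (by omega)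
        nlinarith [zpow_pos (by norm_num : (0:ℝ) < 2) (-(n : ℤ))]
      have harg2 : (2 : ℝ) ^ (-(n : ℤ) + 1) * en x ≤ 1 := by
        have hle : (2 : ℝ) ^ (-(n : ℤ) + 1) ≤ 1 := by
          apply zpow_le_one_of_nonpos₀ (by norm_num : (1:ℝ) ≤ 2) (by omega)
        nlinarith [zpow_pos (by norm_num : (0:ℝ) < 2) (-(n : ℤ) + 1)]
      cases σ
      · rw [psiLP_neg_apply Θ hn', hχ1 _ harg1, hχ1 _ harg2]
        ring
      · rw [psiLP_pos_apply Θ hn', hχ1 _ harg1, hχ1 _ harg2]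
        ring
  · rcases Nat.eq_zero_or_pos n with hn | hn
    · subst hn
      have heq : psiLP χ Θ 0 σ = fun x => χ (en x) / 2 := funext fun x => psiLP_zero_apply Θ σ x
      rw [heq]
      exact (hχs.contDiffAt.comp ξ (en_contDiffAt hξ)).div_const 2
    · have hn' : n ≠ 0 := hn.ne'
      have hφ : ContDiffAt ℝ (⊤ : ℕ∞) (fun x => if σ then Θ.phip x else Θ.phim x) ξ := by
        have hmem : {v : ℝ × ℝ | v ≠ 0} ∈ 𝓝 ξ := by
          exact (isOpen_compl_singleton).mem_nhds hξ
        cases σ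
        · simpa using Θ.smooth_m.contDiffAt hmem
        · simpa using Θ.smooth_p.contDiffAt hmem
      have hd : ContDiffAt ℝ (⊤ : ℕ∞)
          (fun x => χ ((2 : ℝ) ^ (-(n : ℤ)) * en x) - χ ((2 : ℝ) ^ (-(n : ℤ) + 1) * en x)) ξ := by
        apply ContDiffAt.sub
        · exact hχs.contDiffAt.comp ξ ((contDiffAt_const).mul (en_contDiffAt hξ))
        · exact hχs.contDiffAt.comp ξ ((contDiffAt_const).mul (en_contDiffAt hξ))
      have heq : psiLP χ Θ n σ = fun x => (if σ then Θ.phip x else Θ.phim x) *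
          (χ ((2 : ℝ) ^ (-(n : ℤ)) * en x) - χ ((2 : ℝ) ^ (-(n : ℤ) + 1) * en x)) := by
        funext x
        cases σ
        · rw [psiLP_neg_apply Θ hn']
          simp
        · rw [psiLP_pos_apply Θ hn']
          simp
      rw [heq]
      exact hφ.mul hd

lemma psiLP_hasCompactSupport (hχ : ChiOK χ) (Θ : Polarization) (n : ℕ) (σ : Bool) :
    HasCompactSupport (psiLP χ Θ n σ) := by
  obtain ⟨hχs, hχ1, hχ0, hχm⟩ := hχ
  have hsub : Function.support (psiLP χ Θ n σ) ⊆ {ξ : ℝ × ℝ | en ξ ≤ 2 ^ (n + 1)} := by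
    intro ξ hξ
    simp only [Function.mem_support] at hξ
    simp only [Set.mem_setOf_eq]
    by_contra hlt
    push_neg at hlt
    apply hξ
    rcases Nat.eq_zero_or_pos n with hn | hn
    · subst hn
      rw [psiLP_zero_apply, hχ0 (en ξ) (by norm_num at hlt ⊢; linarith)]
      norm_num
    · have hn' : n ≠ 0 := hn.ne'
      have h2n : (2:ℝ) * 2 ^ n ≤ en ξ := by
        rw [← pow_succ']
        linarith
      have h1 : (2:ℝ) ≤ (2 : ℝ) ^ (-(n : ℤ)) * en ξ := by
        rw [zpow_neg, zpow_natCast, inv_mul_eq_div, le_div_iff₀ (by positivity)]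
        linarith
      have h2 : (2:ℝ) ≤ (2 : ℝ) ^ (-(n : ℤ) + 1) * en ξ := by
        rw [two_zpow_succ]
        nlinarith
      cases σ
      · rw [psiLP_neg_apply Θ hn', hχ0 _ h1, hχ0 _ h2]
        ring
      · rw [psiLP_pos_apply Θ hn', hχ0 _ h1, hχ0 _ h2]
        ring
  have hcpt : IsCompact {ξ : ℝ × ℝ | en ξ ≤ 2 ^ (n + 1)} := by
    apply Metric.isCompact_of_isClosed_isBounded
    · exact isClosed_le en_continuous continuous_const
    · rw [isBounded_iff_forall_norm_le]
      exact ⟨2 ^ (n + 1), fun x hx => le_trans (norm_le_en x) hx⟩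
  exact HasCompactSupport.of_support_subset_isCompact hcpt hsub

/-! #### The Fourier transform of a compactly supported continuous function -/

lemma hasCompactSupport_of_support_subset_Rset {η δ : ℝ} {u : ℝ × ℝ → ℂ}
    (hu : Function.support u ⊆ Rset η δ) : HasCompactSupport u := by
  have hb : Bornology.IsBounded (Rset η δ) :=
    (Metric.isBounded_Ioo _ _).prod (Metric.isBounded_Ioo _ _)
  apply HasCompactSupport.of_support_subset_isCompact
    (Metric.isCompact_of_isClosed_isBounded isClosed_closure hb.closure)
  exact hu.trans subset_closure

lemma FT_contDiff {u : ℝ × ℝ → ℂ} (hc : Continuous u) (hs : HasCompactSupport u) :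
    ContDiff ℝ (⊤ : ℕ∞) (FT u) := by
  have hFT : FT u = (𝓕 (u ∘ ⇑PL)) ∘ ⇑PL.symm := by
    funext ξ
    have := FT_comp u (PL.symm ξ)
    rw [PL.apply_symm_apply] at this
    rw [this]
    rfl
  rw [hFT]
  have hmom : ∀ (i : ℕ), (i : ℕ∞) ≤ (⊤ : ℕ∞) →
      Integrable (fun v : E2 => ‖v‖ ^ i * ‖(u ∘ ⇑PL) v‖) := by
    intro i _
    apply Continuous.integrable_of_hasCompactSupport
    · exact (continuous_norm.pow i).mul (hc.comp PL.continuous).norm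
    · exact ((hs.comp_homeomorph PL.toHomeomorph).norm).mul_left
  exact (Real.contDiff_fourier hmom).comp PL.symm.contDiff

lemma FT_continuous {u : ℝ × ℝ → ℂ} (hc : Continuous u) (hs : HasCompactSupport u) :
    Continuous (FT u) := (FT_contDiff hc hs).continuous

/-! #### The localized pieces `ψ · 𝓕u` -/

lemma psiMul_contDiff (hχ : ChiOK χ) (Θ : Polarization) (n : ℕ) (σ : Bool)
    {u : ℝ × ℝ → ℂ} (hc : Continuous u) (hs : HasCompactSupport u) :
    ContDiff ℝ (⊤ : ℕ∞) (fun ξ => (psiLP χ Θ n σ ξ : ℂ) * FT u ξ) := by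
  apply ContDiff.mul ?_ (FT_contDiff hc hs)
  exact Complex.ofRealCLM.contDiff.comp (psiLP_contDiff hχ Θ n σ)

lemma psiMul_hasCompactSupport (hχ : ChiOK χ) (Θ : Polarization) (n : ℕ) (σ : Bool)
    (u : ℝ × ℝ → ℂ) :
    HasCompactSupport (fun ξ => (psiLP χ Θ n σ ξ : ℂ) * FT u ξ) := by
  apply HasCompactSupport.mul_right
  exact (psiLP_hasCompactSupport hχ Θ n σ).comp_left (g := fun t : ℝ => (t : ℂ)) (by simp)

/-! #### Hölder and Cauchy-Schwarz tools -/

lemma holder_L2 {F G : ℝ × ℝ → ℂ} (hF : Continuous F) (hG : Continuous G) :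
    ∫⁻ ξ, (‖F ξ‖₊ : ℝ≥0∞) * (‖G ξ‖₊ : ℝ≥0∞) ≤ eLpNorm F 2 volume * eLpNorm G 2 volume := by
  rw [eLpNorm_eq_lintegral_rpow_enorm_toReal (by norm_num) (by norm_num),
    eLpNorm_eq_lintegral_rpow_enorm_toReal (by norm_num) (by norm_num)]
  simp only [ENNReal.toReal_ofNat]
  have hpq : Real.HolderConjugate 2 2 := ⟨by norm_num, by norm_num, by norm_num⟩
  have hFm : AEMeasurable (fun ξ => (‖F ξ‖₊ : ℝ≥0∞)) volume :=
    (measurable_coe_nnreal_ennreal.comp hF.measurable.nnnorm).aemeasurable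
  have hGm : AEMeasurable (fun ξ => (‖G ξ‖₊ : ℝ≥0∞)) volume :=
    (measurable_coe_nnreal_ennreal.comp hG.measurable.nnnorm).aemeasurable
  have := ENNReal.lintegral_mul_le_Lp_mul_Lq volume hpq hFm hGm
  simpa [enorm_eq_nnnorm] using this

lemma tsum_cauchy_schwarz (x y : ℕ → ℝ≥0∞) :
    ∑' n, x n * y n ≤ (∑' n, x n ^ 2) ^ (1/2 : ℝ) * (∑' n, y n ^ 2) ^ (1/2 : ℝ) := by
  have hpq : Real.HolderConjugate 2 2 := ⟨by norm_num, by norm_num, by norm_num⟩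
  have h := ENNReal.lintegral_mul_le_Lp_mul_Lq (Measure.count : Measure ℕ) hpq
    (f := x) (g := y) (measurable_of_countable x).aemeasurable
    (measurable_of_countable y).aemeasurable
  rw [lintegral_count] at h
  have h2 : ∀ z : ℕ → ℝ≥0∞, ∫⁻ n, z n ^ (2:ℝ) ∂(Measure.count) = ∑' n, z n ^ 2 := by
    intro z
    rw [lintegral_count]
    congr 1 with n
    rw [← ENNReal.rpow_natCast (z n) 2]
    norm_num
  calc ∑' n, x n * y n ≤ (∫⁻ n, x n ^ (2:ℝ) ∂(Measure.count)) ^ (1/(2:ℝ)) *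
        (∫⁻ n, y n ^ (2:ℝ) ∂(Measure.count)) ^ (1/(2:ℝ)) := h
    _ = (∑' n, x n ^ 2) ^ (1/2 : ℝ) * (∑' n, y n ^ 2) ^ (1/2 : ℝ) := by rw [h2 x, h2 y]

lemma tsum_cs_weighted (x y wx wy : ℕ → ℝ≥0∞) (hw : ∀ n, 1 ≤ wx n * wy n) :
    ∑' n, x n * y n ≤
      (∑' n, wx n * x n ^ 2) ^ (1/2 : ℝ) * (∑' n, wy n * y n ^ 2) ^ (1/2 : ℝ) := by
  have step : ∀ n, x n * y n ≤ (wx n ^ (1/2:ℝ) * x n) * (wy n ^ (1/2:ℝ) * y n) := by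
    intro n
    have h1 : (1 : ℝ≥0∞) ≤ wx n ^ (1/2:ℝ) * wy n ^ (1/2:ℝ) := by
      rw [← ENNReal.mul_rpow_of_nonneg _ _ (by norm_num : (0:ℝ) ≤ 1/2)]
      calc (1:ℝ≥0∞) = 1 ^ (1/2:ℝ) := (ENNReal.one_rpow _).symm
        _ ≤ (wx n * wy n) ^ (1/2:ℝ) := ENNReal.rpow_le_rpow (hw n) (by norm_num)
    calc x n * y n = 1 * (x n * y n) := (one_mul _).symm
      _ ≤ (wx n ^ (1/2:ℝ) * wy n ^ (1/2:ℝ)) * (x n * y n) := by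
          exact mul_le_mul_left h1 _
      _ = (wx n ^ (1/2:ℝ) * x n) * (wy n ^ (1/2:ℝ) * y n) := by ring
  have hsq : ∀ (w z : ℕ → ℝ≥0∞) (n : ℕ), (w n ^ (1/2:ℝ) * z n) ^ 2 = w n * z n ^ 2 := by
    intro w z n
    rw [mul_pow]
    congr 1
    rw [← ENNReal.rpow_natCast (w n ^ (1/2:ℝ)) 2, ← ENNReal.rpow_mul]
    norm_num
  calc ∑' n, x n * y n ≤ ∑' n, (wx n ^ (1/2:ℝ) * x n) * (wy n ^ (1/2:ℝ) * y n) :=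
        ENNReal.tsum_le_tsum step
    _ ≤ (∑' n, (wx n ^ (1/2:ℝ) * x n) ^ 2) ^ (1/2 : ℝ) *
        (∑' n, (wy n ^ (1/2:ℝ) * y n) ^ 2) ^ (1/2 : ℝ) := tsum_cauchy_schwarz _ _
    _ = (∑' n, wx n * x n ^ 2) ^ (1/2 : ℝ) * (∑' n, wy n * y n ^ 2) ^ (1/2 : ℝ) := by
        simp_rw [hsq]

lemma segNorm_le_anorm (χ : ℝ → ℝ) (Θ : Polarization) (p q : ℝ) (σ : Bool) (u : ℝ × ℝ → ℂ) :
    segNorm χ Θ (if σ then p else q) σ u ≤ anorm χ Θ p q u := by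
  have hsq : ∀ s : ℝ≥0∞, (s ^ 2) ^ (1/2 : ℝ) = s := by
    intro s
    rw [← ENNReal.rpow_natCast s 2, ← ENNReal.rpow_mul]
    norm_num
  rw [anorm]
  cases σ
  · calc segNorm χ Θ (if false then p else q) false u
        = ((segNorm χ Θ q false u) ^ 2) ^ (1/2 : ℝ) := by rw [hsq]; simp
      _ ≤ ((segNorm χ Θ p true u) ^ 2 + (segNorm χ Θ q false u) ^ 2) ^ (1/2 : ℝ) :=
          ENNReal.rpow_le_rpow le_add_self (by norm_num)
  · calc segNorm χ Θ (if true then p else q) true u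
        = ((segNorm χ Θ p true u) ^ 2) ^ (1/2 : ℝ) := by rw [hsq]; simp
      _ ≤ ((segNorm χ Θ p true u) ^ 2 + (segNorm χ Θ q false u) ^ 2) ^ (1/2 : ℝ) :=
          ENNReal.rpow_le_rpow le_self_add (by norm_num)

/-- The key per-`n` estimate. -/
lemma per_n (hχ : ChiOK χ) (Θhat Θ₁ Θ₂ : Polarization)
    (hK : closure (Set.univ \ Θ₁.Cp) ∩ closure (Set.univ \ Θ₂.Cp) ⊆ {0})
    {v w : ℝ × ℝ → ℂ} (hvc : Continuous v) (hvs : HasCompactSupport v)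
    (hwc : Continuous w) (hws : HasCompactSupport w) (n : ℕ) :
    ENNReal.ofReal
        ‖∫ x : ℝ × ℝ, psiD χ Θhat n false v x * (starRingEnd ℂ) (psiD χ Θhat n false w x)‖ ≤
      eLpNorm (fun ξ => (psiLP χ Θ₁ n true ξ : ℂ) * FT v ξ) 2 volume *
          eLpNorm (fun ξ => (psiLP χ Θ₂ n true ξ : ℂ) * FT w ξ) 2 volume +
        (eLpNorm (fun ξ => (psiLP χ Θ₁ n true ξ : ℂ) * FT v ξ) 2 volume *
            eLpNorm (fun ξ => (psiLP χ Θ₂ n false ξ : ℂ) * FT w ξ) 2 volume +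
          (eLpNorm (fun ξ => (psiLP χ Θ₁ n true ξ : ℂ) * FT v ξ) 2 volume *
              eLpNorm (fun ξ => (psiLP χ Θ₂ n true ξ : ℂ) * FT w ξ) 2 volume +
            eLpNorm (fun ξ => (psiLP χ Θ₁ n false ξ : ℂ) * FT v ξ) 2 volume *
              eLpNorm (fun ξ => (psiLP χ Θ₂ n true ξ : ℂ) * FT w ξ) 2 volume)) := by
  have hfhc := psiMul_contDiff hχ Θhat n false hvc hvs
  have hghc := psiMul_contDiff hχ Θhat n false hwc hws
  have hfhs := psiMul_hasCompactSupport hχ Θhat n false v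
  have hghs := psiMul_hasCompactSupport hχ Θhat n false w
  have hf1pc := psiMul_contDiff hχ Θ₁ n true hvc hvs
  have hf1mc := psiMul_contDiff hχ Θ₁ n false hvc hvs
  have hg2pc := psiMul_contDiff hχ Θ₂ n true hwc hws
  have hg2mc := psiMul_contDiff hχ Θ₂ n false hwc hws
  have hpar := parseval_R2 hfhc hfhs hghc hghs
  show ENNReal.ofReal ‖∫ x : ℝ × ℝ,
      invFT (fun ξ => (psiLP χ Θhat n false ξ : ℂ) * FT v ξ) x *
        (starRingEnd ℂ) (invFT (fun ξ => (psiLP χ Θhat n false ξ : ℂ) * FT w ξ) x)‖ ≤ _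
  rw [hpar]
  have hint : Integrable (fun ξ : ℝ × ℝ => ((psiLP χ Θhat n false ξ : ℂ) * FT v ξ) *
      (starRingEnd ℂ) ((psiLP χ Θhat n false ξ : ℂ) * FT w ξ)) volume := by
    apply Continuous.integrable_of_hasCompactSupport
    · exact hfhc.continuous.mul (Complex.continuous_conj.comp hghc.continuous)
    · exact hfhs.mul_right
  -- measurability of the norm functions
  have hm : ∀ F : ℝ × ℝ → ℂ, Continuous F → Measurable fun ξ => (‖F ξ‖₊ : ℝ≥0∞) := by
    intro F hF
    exact measurable_coe_nnreal_ennreal.comp hF.measurable.nnnorm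
  have h0 : (volume : Measure (ℝ × ℝ)) {(0 : ℝ × ℝ)} = 0 := by
    have hset : ({(0 : ℝ × ℝ)} : Set (ℝ × ℝ)) = ({0} : Set ℝ) ×ˢ ({0} : Set ℝ) := by
      ext p
      simp [Prod.ext_iff]
    rw [hset, Measure.volume_eq_prod, Measure.prod_prod]
    simp
  have hae : ({(0 : ℝ × ℝ)}ᶜ : Set (ℝ × ℝ)) ∈ MeasureTheory.ae volume :=
    compl_mem_ae_iff.2 h0
  calc ENNReal.ofReal ‖∫ ξ : ℝ × ℝ, ((psiLP χ Θhat n false ξ : ℂ) * FT v ξ) *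
          (starRingEnd ℂ) ((psiLP χ Θhat n false ξ : ℂ) * FT w ξ)‖
      ≤ ENNReal.ofReal (∫ ξ : ℝ × ℝ, ‖((psiLP χ Θhat n false ξ : ℂ) * FT v ξ) *
          (starRingEnd ℂ) ((psiLP χ Θhat n false ξ : ℂ) * FT w ξ)‖) :=
        ENNReal.ofReal_le_ofReal (norm_integral_le_integral_norm _)
    _ = ∫⁻ ξ : ℝ × ℝ, (‖((psiLP χ Θhat n false ξ : ℂ) * FT v ξ) *
          (starRingEnd ℂ) ((psiLP χ Θhat n false ξ : ℂ) * FT w ξ)‖₊ : ℝ≥0∞) :=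
        ofReal_integral_norm_eq_lintegral_enorm hint
    _ ≤ ∫⁻ ξ : ℝ × ℝ,
          ((‖(psiLP χ Θ₁ n true ξ : ℂ) * FT v ξ‖₊ : ℝ≥0∞) *
              (‖(psiLP χ Θ₂ n true ξ : ℂ) * FT w ξ‖₊ : ℝ≥0∞) +
            ((‖(psiLP χ Θ₁ n true ξ : ℂ) * FT v ξ‖₊ : ℝ≥0∞) *
                (‖(psiLP χ Θ₂ n false ξ : ℂ) * FT w ξ‖₊ : ℝ≥0∞) +
              ((‖(psiLP χ Θ₁ n true ξ : ℂ) * FT v ξ‖₊ : ℝ≥0∞) *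
                  (‖(psiLP χ Θ₂ n true ξ : ℂ) * FT w ξ‖₊ : ℝ≥0∞) +
                (‖(psiLP χ Θ₁ n false ξ : ℂ) * FT v ξ‖₊ : ℝ≥0∞) *
                  (‖(psiLP χ Θ₂ n true ξ : ℂ) * FT w ξ‖₊ : ℝ≥0∞)))) := by
        apply lintegral_mono_ae
        filter_upwards [hae] with ξ hξ
        have hξ0 : ξ ≠ 0 := hξ
        have hofr : ∀ (Θ : Polarization) (σ : Bool) (u : ℝ × ℝ → ℂ),
            (‖(psiLP χ Θ n σ ξ : ℂ) * FT u ξ‖₊ : ℝ≥0∞) =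
              ENNReal.ofReal (psiLP χ Θ n σ ξ * ‖FT u ξ‖) := by
          intro Θ σ u
          rw [← enorm_eq_nnnorm, ← ofReal_norm, norm_mul, Complex.norm_real, Real.norm_eq_abs,
            abs_of_nonneg (psiLP_nonneg hχ Θ n σ ξ)]
        have hconj : (‖((psiLP χ Θhat n false ξ : ℂ) * FT v ξ) *
            (starRingEnd ℂ) ((psiLP χ Θhat n false ξ : ℂ) * FT w ξ)‖₊ : ℝ≥0∞) =
            ENNReal.ofReal ((psiLP χ Θhat n false ξ * ‖FT v ξ‖) *
              (psiLP χ Θhat n false ξ * ‖FT w ξ‖)) := by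
          rw [← enorm_eq_nnnorm, ← ofReal_norm, norm_mul, RCLike.norm_conj, norm_mul, norm_mul,
            Complex.norm_real, Real.norm_eq_abs,
            abs_of_nonneg (psiLP_nonneg hχ Θhat n false ξ)]
        rw [hconj, hofr Θ₁ true v, hofr Θ₁ false v, hofr Θ₂ true w, hofr Θ₂ false w]
        have hb := psiLP_nonneg hχ Θ₁ n true ξ
        have hb' := psiLP_nonneg hχ Θ₁ n false ξ
        have hc := psiLP_nonneg hχ Θ₂ n true ξ
        have hd := psiLP_nonneg hχ Θ₂ n false ξ
        have hav : (0:ℝ) ≤ ‖FT v ξ‖ := norm_nonneg _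
        have haw : (0:ℝ) ≤ ‖FT w ξ‖ := norm_nonneg _
        have q1 : (0:ℝ) ≤ psiLP χ Θ₁ n true ξ * ‖FT v ξ‖ * (psiLP χ Θ₂ n true ξ * ‖FT w ξ‖) :=
          mul_nonneg (mul_nonneg hb hav) (mul_nonneg hc haw)
        have q2 : (0:ℝ) ≤ psiLP χ Θ₁ n true ξ * ‖FT v ξ‖ * (psiLP χ Θ₂ n false ξ * ‖FT w ξ‖) :=
          mul_nonneg (mul_nonneg hb hav) (mul_nonneg hd haw)
        have q4 : (0:ℝ) ≤ psiLP χ Θ₁ n false ξ * ‖FT v ξ‖ * (psiLP χ Θ₂ n true ξ * ‖FT w ξ‖) :=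
          mul_nonneg (mul_nonneg hb' hav) (mul_nonneg hc haw)
        have realineq : (psiLP χ Θhat n false ξ * ‖FT v ξ‖) * (psiLP χ Θhat n false ξ * ‖FT w ξ‖) ≤
            psiLP χ Θ₁ n true ξ * ‖FT v ξ‖ * (psiLP χ Θ₂ n true ξ * ‖FT w ξ‖) +
              (psiLP χ Θ₁ n true ξ * ‖FT v ξ‖ * (psiLP χ Θ₂ n false ξ * ‖FT w ξ‖) +
                (psiLP χ Θ₁ n true ξ * ‖FT v ξ‖ * (psiLP χ Θ₂ n true ξ * ‖FT w ξ‖) +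
                  psiLP χ Θ₁ n false ξ * ‖FT v ξ‖ * (psiLP χ Θ₂ n true ξ * ‖FT w ξ‖))) := by
          have hkey := psiLP_key hχ Θhat Θ₁ Θ₂ hK n hξ0
          calc (psiLP χ Θhat n false ξ * ‖FT v ξ‖) * (psiLP χ Θhat n false ξ * ‖FT w ξ‖)
              = psiLP χ Θhat n false ξ ^ 2 * (‖FT v ξ‖ * ‖FT w ξ‖) := by ring
            _ ≤ (psiLP χ Θ₁ n true ξ * (psiLP χ Θ₂ n true ξ + psiLP χ Θ₂ n false ξ) +
                  (psiLP χ Θ₁ n true ξ + psiLP χ Θ₁ n false ξ) * psiLP χ Θ₂ n true ξ) *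
                  (‖FT v ξ‖ * ‖FT w ξ‖) :=
                mul_le_mul_of_nonneg_right hkey (by positivity)
            _ = _ := by ring
        calc ENNReal.ofReal ((psiLP χ Θhat n false ξ * ‖FT v ξ‖) *
                (psiLP χ Θhat n false ξ * ‖FT w ξ‖))
            ≤ ENNReal.ofReal (psiLP χ Θ₁ n true ξ * ‖FT v ξ‖ * (psiLP χ Θ₂ n true ξ * ‖FT w ξ‖) +
                (psiLP χ Θ₁ n true ξ * ‖FT v ξ‖ * (psiLP χ Θ₂ n false ξ * ‖FT w ξ‖) +
                  (psiLP χ Θ₁ n true ξ * ‖FT v ξ‖ * (psiLP χ Θ₂ n true ξ * ‖FT w ξ‖) +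
                    psiLP χ Θ₁ n false ξ * ‖FT v ξ‖ * (psiLP χ Θ₂ n true ξ * ‖FT w ξ‖)))) :=
              ENNReal.ofReal_le_ofReal realineq
          _ = _ := by
              rw [ENNReal.ofReal_add q1 (add_nonneg q2 (add_nonneg q1 q4)),
                ENNReal.ofReal_add q2 (add_nonneg q1 q4), ENNReal.ofReal_add q1 q4,
                ENNReal.ofReal_mul (mul_nonneg hb hav), ENNReal.ofReal_mul (mul_nonneg hb hav),
                ENNReal.ofReal_mul (mul_nonneg hb' hav)]
    _ = (∫⁻ ξ : ℝ × ℝ, (‖(psiLP χ Θ₁ n true ξ : ℂ) * FT v ξ‖₊ : ℝ≥0∞) *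
            (‖(psiLP χ Θ₂ n true ξ : ℂ) * FT w ξ‖₊ : ℝ≥0∞)) +
          ((∫⁻ ξ : ℝ × ℝ, (‖(psiLP χ Θ₁ n true ξ : ℂ) * FT v ξ‖₊ : ℝ≥0∞) *
              (‖(psiLP χ Θ₂ n false ξ : ℂ) * FT w ξ‖₊ : ℝ≥0∞)) +
            ((∫⁻ ξ : ℝ × ℝ, (‖(psiLP χ Θ₁ n true ξ : ℂ) * FT v ξ‖₊ : ℝ≥0∞) *
                (‖(psiLP χ Θ₂ n true ξ : ℂ) * FT w ξ‖₊ : ℝ≥0∞)) +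
              (∫⁻ ξ : ℝ × ℝ, (‖(psiLP χ Θ₁ n false ξ : ℂ) * FT v ξ‖₊ : ℝ≥0∞) *
                (‖(psiLP χ Θ₂ n true ξ : ℂ) * FT w ξ‖₊ : ℝ≥0∞)))) := by
        rw [lintegral_add_left ((hm _ hf1pc.continuous).fun_mul (hm _ hg2pc.continuous)),
          lintegral_add_left ((hm _ hf1pc.continuous).fun_mul (hm _ hg2mc.continuous)),
          lintegral_add_left ((hm _ hf1pc.continuous).fun_mul (hm _ hg2pc.continuous))]
    _ ≤ _ := by
        have H1 := holder_L2 hf1pc.continuous hg2pc.continuous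
        have H2 := holder_L2 hf1pc.continuous hg2mc.continuous
        have H3 := holder_L2 hf1mc.continuous hg2pc.continuous
        exact add_le_add H1 (add_le_add H2 (add_le_add H1 H3))

end Auxiliary

/-- Lemma 2.6, transversality/almost-orthogonality. If `Θ̂ < Θ₁`,
`Θ̂ < Θ₂` and the closures of `ℝ² ∖ C_{1,+}` and `ℝ² ∖ C_{2,+}` meet only at `0`, then
`∑_n |⟨ψ_{Θ̂,n,-}(D)v, ψ_{Θ̂,n,-}(D)w⟩_{L²}| ≤ C·|v|_{Θ₁}·|w|_{Θ₂}` with `C` depending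
only on `ε`. -/
theorem statement11 (r : ℕ) (hr : 3 ≤ r) (η δ ε : ℝ) (hη : 0 < η) (hδ : 0 < δ)
    (hε₁ : 0 < ε) (hε₂ : ε < 1 / 2) (χ : ℝ → ℝ) (hχ : ChiOK χ) :
    ∃ C : ℝ≥0, ∀ (Θhat Θ₁ Θ₂ : Polarization),
      PolLt Θhat Θ₁ → PolLt Θhat Θ₂ →
      closure (Set.univ \ Θ₁.Cp) ∩ closure (Set.univ \ Θ₂.Cp) ⊆ {0} →
      ∀ v w : ℝ × ℝ → ℂ, CrSupp r η δ v → CrSupp r η δ w →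
        ∑' n : ℕ,
            ENNReal.ofReal
              ‖∫ x : ℝ × ℝ,
                  psiD χ Θhat n false v x * (starRingEnd ℂ) (psiD χ Θhat n false w x)‖ ≤
          C * (anorm χ Θ₁ (1 - ε) (-ε) v * anorm χ Θ₂ (1 - ε) (-ε) w) := by
  classical
  refine ⟨4, ?_⟩
  intro Θhat Θ₁ Θ₂ _ _ hK v w hv hw
  obtain ⟨hvr, hvsub⟩ := hv
  obtain ⟨hwr, hwsub⟩ := hw
  have hvc : Continuous v := hvr.continuous
  have hwc : Continuous w := hwr.continuous
  have hvs : HasCompactSupport v := hasCompactSupport_of_support_subset_Rset hvsub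
  have hws : HasCompactSupport w := hasCompactSupport_of_support_subset_Rset hwsub
  set A : ℕ → ℝ≥0∞ :=
    fun n => eLpNorm (fun ξ => (psiLP χ Θ₁ n true ξ : ℂ) * FT v ξ) 2 volume with hA
  set B : ℕ → ℝ≥0∞ :=
    fun n => eLpNorm (fun ξ => (psiLP χ Θ₁ n false ξ : ℂ) * FT v ξ) 2 volume with hB
  set Cc : ℕ → ℝ≥0∞ :=
    fun n => eLpNorm (fun ξ => (psiLP χ Θ₂ n true ξ : ℂ) * FT w ξ) 2 volume with hC
  set D : ℕ → ℝ≥0∞ :=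
    fun n => eLpNorm (fun ξ => (psiLP χ Θ₂ n false ξ : ℂ) * FT w ξ) 2 volume with hD
  have hper : ∀ n : ℕ, ENNReal.ofReal
      ‖∫ x : ℝ × ℝ, psiD χ Θhat n false v x * (starRingEnd ℂ) (psiD χ Θhat n false w x)‖ ≤
      A n * Cc n + (A n * D n + (A n * Cc n + B n * Cc n)) := fun n =>
    per_n hχ Θhat Θ₁ Θ₂ hK hvc hvs hwc hws n
  -- weights
  set wp : ℕ → ℝ≥0∞ := fun n => ENNReal.ofReal ((2:ℝ) ^ (2 * (1 - ε) * (n:ℝ))) with hwp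
  set wm : ℕ → ℝ≥0∞ := fun n => ENNReal.ofReal ((2:ℝ) ^ (2 * (-ε) * (n:ℝ))) with hwm
  have hone : ∀ t : ℝ, 0 ≤ t → (1:ℝ≥0∞) ≤ ENNReal.ofReal ((2:ℝ) ^ t) := by
    intro t ht
    rw [ENNReal.one_le_ofReal]
    calc (1:ℝ) = (2:ℝ) ^ (0:ℝ) := (Real.rpow_zero 2).symm
      _ ≤ (2:ℝ) ^ t := Real.rpow_le_rpow_of_exponent_le one_le_two ht
  have hwpp : ∀ n : ℕ, (1:ℝ≥0∞) ≤ wp n * wp n := by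
    intro n
    have h1 : (1:ℝ≥0∞) ≤ wp n := hone _ (by nlinarith [Nat.cast_nonneg (α := ℝ) n, hε₂])
    calc (1:ℝ≥0∞) = 1 * 1 := (one_mul 1).symm
      _ ≤ wp n * wp n := mul_le_mul' h1 h1
  have hwpm : ∀ n : ℕ, (1:ℝ≥0∞) ≤ wp n * wm n := by
    intro n
    rw [hwp, hwm]
    simp only
    rw [← ENNReal.ofReal_mul (by positivity), ← Real.rpow_add (by norm_num : (0:ℝ) < 2)]
    exact hone _ (by nlinarith [Nat.cast_nonneg (α := ℝ) n, hε₂])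
  have hwmp : ∀ n : ℕ, (1:ℝ≥0∞) ≤ wm n * wp n := by
    intro n
    rw [hwm, hwp]
    simp only
    rw [← ENNReal.ofReal_mul (by positivity), ← Real.rpow_add (by norm_num : (0:ℝ) < 2)]
    exact hone _ (by nlinarith [Nat.cast_nonneg (α := ℝ) n, hε₂])
  -- identify the weighted sums with the seminorms
  have hSA : (∑' n, wp n * A n ^ 2) ^ (1/2 : ℝ) = segNorm χ Θ₁ (1 - ε) true v := rfl
  have hSB : (∑' n, wm n * B n ^ 2) ^ (1/2 : ℝ) = segNorm χ Θ₁ (-ε) false v := rfl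
  have hSC : (∑' n, wp n * Cc n ^ 2) ^ (1/2 : ℝ) = segNorm χ Θ₂ (1 - ε) true w := rfl
  have hSD : (∑' n, wm n * D n ^ 2) ^ (1/2 : ℝ) = segNorm χ Θ₂ (-ε) false w := rfl
  have hA1 : segNorm χ Θ₁ (1 - ε) true v ≤ anorm χ Θ₁ (1 - ε) (-ε) v :=
    segNorm_le_anorm χ Θ₁ (1 - ε) (-ε) true v
  have hB1 : segNorm χ Θ₁ (-ε) false v ≤ anorm χ Θ₁ (1 - ε) (-ε) v :=
    segNorm_le_anorm χ Θ₁ (1 - ε) (-ε) false v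
  have hC1 : segNorm χ Θ₂ (1 - ε) true w ≤ anorm χ Θ₂ (1 - ε) (-ε) w :=
    segNorm_le_anorm χ Θ₂ (1 - ε) (-ε) true w
  have hD1 : segNorm χ Θ₂ (-ε) false w ≤ anorm χ Θ₂ (1 - ε) (-ε) w :=
    segNorm_le_anorm χ Θ₂ (1 - ε) (-ε) false w
  set P : ℝ≥0∞ := anorm χ Θ₁ (1 - ε) (-ε) v * anorm χ Θ₂ (1 - ε) (-ε) w with hP
  have hAC : ∑' n, A n * Cc n ≤ P := by
    calc ∑' n, A n * Cc n
        ≤ (∑' n, wp n * A n ^ 2) ^ (1/2 : ℝ) * (∑' n, wp n * Cc n ^ 2) ^ (1/2 : ℝ) :=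
          tsum_cs_weighted A Cc wp wp hwpp
      _ = segNorm χ Θ₁ (1 - ε) true v * segNorm χ Θ₂ (1 - ε) true w := by rw [hSA, hSC]
      _ ≤ P := mul_le_mul' hA1 hC1
  have hAD : ∑' n, A n * D n ≤ P := by
    calc ∑' n, A n * D n
        ≤ (∑' n, wp n * A n ^ 2) ^ (1/2 : ℝ) * (∑' n, wm n * D n ^ 2) ^ (1/2 : ℝ) :=
          tsum_cs_weighted A D wp wm hwpm
      _ = segNorm χ Θ₁ (1 - ε) true v * segNorm χ Θ₂ (-ε) false w := by rw [hSA, hSD]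
      _ ≤ P := mul_le_mul' hA1 hD1
  have hBC : ∑' n, B n * Cc n ≤ P := by
    calc ∑' n, B n * Cc n
        ≤ (∑' n, wm n * B n ^ 2) ^ (1/2 : ℝ) * (∑' n, wp n * Cc n ^ 2) ^ (1/2 : ℝ) :=
          tsum_cs_weighted B Cc wm wp hwmp
      _ = segNorm χ Θ₁ (-ε) false v * segNorm χ Θ₂ (1 - ε) true w := by rw [hSB, hSC]
      _ ≤ P := mul_le_mul' hB1 hC1
  calc ∑' n : ℕ, ENNReal.ofReal
        ‖∫ x : ℝ × ℝ, psiD χ Θhat n false v x * (starRingEnd ℂ) (psiD χ Θhat n false w x)‖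
      ≤ ∑' n : ℕ, (A n * Cc n + (A n * D n + (A n * Cc n + B n * Cc n))) :=
        ENNReal.tsum_le_tsum hper
    _ = (∑' n, A n * Cc n) + ((∑' n, A n * D n) + ((∑' n, A n * Cc n) + ∑' n, B n * Cc n)) := by
        rw [ENNReal.tsum_add, ENNReal.tsum_add, ENNReal.tsum_add]
    _ ≤ P + (P + (P + P)) :=
        add_le_add hAC (add_le_add hAD (add_le_add hAC hBC))
    _ = 4 * P := by ring
    _ = ((4:ℝ≥0) : ℝ≥0∞) * (anorm χ Θ₁ (1 - ε) (-ε) v * anorm χ Θ₂ (1 - ε) (-ε) w) := by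
        rw [hP]
        norm_num


end AngleMult
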